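/- arXiv:1211.5733 — 5 statements merged into one kernel-verified Lean document; each statement's English description precedes it below -/
import Mathlib

section
/- For all indices 1 ≤ a ≤ p and 1 ≤ s < t ≤ p, one has (1/2)·tr(Σ⁻¹ (γ_a γ_aᵗ) Σ⁻¹ T_{st}) = 0. (This says the Fisher-metric components g_{a(s,t)} between eigenvalue directions and eigenvector directions vanish, i.e., the submanifolds of fixed eigenvectors and of fixed eigenvalues meet orthogonally.) -/
open Matrix

lemma aux_mul_vecMulVec {p : ℕ} (M : Matrix (Fin p) (Fin p) ℝ) (u v : Fin p → ℝ) :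
    M * vecMulVec u v = vecMulVec (M *ᵥ u) v := by
  ext i j
  simp only [mul_apply, vecMulVec_apply, mulVec, dotProduct]
  rw [Finset.sum_mul]
  exact Finset.sum_congr rfl fun k _ => by ring

lemma aux_trace_vecMulVec {p : ℕ} (u v : Fin p → ℝ) :
    trace (vecMulVec u v) = u ⬝ᵥ v := by
  simp [trace, Matrix.diag, vecMulVec_apply, dotProduct]

lemma aux_vecMulVec_mulVec {p : ℕ} (u v w : Fin p → ℝ) :
    vecMulVec u v *ᵥ w = (v ⬝ᵥ w) • u := by
  ext i
  simp [mulVec, vecMulVec_apply, dotProduct, Finset.mul_sum, Finset.sum_mul, mul_assoc, mul_comm, mul_left_comm]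

lemma aux_conj_mulVec {p : ℕ} (Γ : Matrix (Fin p) (Fin p) ℝ) (hΓ : Γᵀ * Γ = 1)
    (d : Fin p → ℝ) (k : Fin p) :
    (Γ * Matrix.diagonal d * Γᵀ) *ᵥ (fun i => Γ i k) = d k • (fun i => Γ i k) := by
  have h1 : (fun i => Γ i k) = Γ *ᵥ Pi.single k 1 := by
    ext i; simp [mulVec_single]
  rw [h1, mulVec_mulVec, Matrix.mul_assoc, Matrix.mul_assoc, hΓ, Matrix.mul_one,
    ← mulVec_mulVec, diagonal_mulVec_single]
  ext i
  simp [mulVec_single, Pi.single_apply, mulVec, dotProduct, mul_comm]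

/-- The Fisher-metric components between eigenvalue directions and
eigenvector directions vanish: with `Σ = Γ Λ Γᵗ` and
`T_{st} = λ_t γ_t γ_sᵗ − λ_s γ_s γ_tᵗ + λ_t γ_s γ_tᵗ − λ_s γ_t γ_sᵗ`, one has
`(1/2)·tr(Σ⁻¹ γ_a γ_aᵗ Σ⁻¹ T_{st}) = 0` for all `a` and `s < t`. -/
theorem fisher_metric_mixed_directions_vanish
    (p : ℕ) (hp : 2 ≤ p)
    (Γ : Matrix (Fin p) (Fin p) ℝ) (hΓ : Γ ∈ Matrix.orthogonalGroup (Fin p) ℝ)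
    (lam : Fin p → ℝ) (hlam : StrictAnti lam) (hpos : ∀ i, 0 < lam i)
    (S : Matrix (Fin p) (Fin p) ℝ)
    (hS : S = Γ * Matrix.diagonal lam * Γᵀ)
    (a s t : Fin p) (hst : s < t)
    (T : Matrix (Fin p) (Fin p) ℝ)
    (hT : T = lam t • Matrix.vecMulVec (fun i => Γ i t) (fun i => Γ i s)
            - lam s • Matrix.vecMulVec (fun i => Γ i s) (fun i => Γ i t)
            + lam t • Matrix.vecMulVec (fun i => Γ i s) (fun i => Γ i t)
            - lam s • Matrix.vecMulVec (fun i => Γ i t) (fun i => Γ i s)) :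
    (1 / 2 : ℝ) * Matrix.trace
        (S⁻¹ * Matrix.vecMulVec (fun i => Γ i a) (fun i => Γ i a) * S⁻¹ * T) = 0 := by
  have hΓtΓ : Γᵀ * Γ = 1 := by
    have := (Matrix.mem_orthogonalGroup_iff' (Fin p) ℝ).mp hΓ
    simpa using this
  have hΓΓt : Γ * Γᵀ = 1 := by
    have := (Matrix.mem_orthogonalGroup_iff (Fin p) ℝ).mp hΓ
    simpa using this
  -- column orthonormality
  have hdot : ∀ j k : Fin p, (fun i => Γ i j) ⬝ᵥ (fun i => Γ i k) = if j = k then 1 else 0 := by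
    intro j k
    have := congrFun (congrFun hΓtΓ j) k
    simpa [mul_apply, dotProduct, transpose_apply, Matrix.one_apply] using this
  -- explicit inverse
  have hne : ∀ i, lam i ≠ 0 := fun i => (hpos i).ne'
  have hSinv : S⁻¹ = Γ * Matrix.diagonal (fun i => (lam i)⁻¹) * Γᵀ := by
    apply Matrix.inv_eq_right_inv
    rw [hS]
    calc Γ * Matrix.diagonal lam * Γᵀ * (Γ * Matrix.diagonal (fun i => (lam i)⁻¹) * Γᵀ)
        = Γ * Matrix.diagonal lam * (Γᵀ * Γ) * Matrix.diagonal (fun i => (lam i)⁻¹) * Γᵀ := by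
          simp only [Matrix.mul_assoc]
      _ = Γ * (Matrix.diagonal lam * Matrix.diagonal (fun i => (lam i)⁻¹)) * Γᵀ := by
          rw [hΓtΓ, Matrix.mul_one]; simp only [Matrix.mul_assoc]
      _ = 1 := by
          rw [diagonal_mul_diagonal]
          have : (fun i => lam i * (lam i)⁻¹) = fun _ => (1 : ℝ) := by
            funext i; exact mul_inv_cancel₀ (hne i)
          rw [this, diagonal_one, Matrix.mul_one, hΓΓt]
  have hvec : ∀ k : Fin p, S⁻¹ *ᵥ (fun i => Γ i k) = (lam k)⁻¹ • (fun i => Γ i k) := by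
    intro k
    rw [hSinv]
    exact aux_conj_mulVec Γ hΓtΓ _ k
  -- key vanishing lemma
  have key : ∀ i j : Fin p, i ≠ j →
      trace (S⁻¹ * Matrix.vecMulVec (fun i => Γ i a) (fun i => Γ i a) * S⁻¹ *
        Matrix.vecMulVec (fun m => Γ m i) (fun m => Γ m j)) = 0 := by
    intro i j hij
    rw [aux_mul_vecMulVec, aux_trace_vecMulVec]
    rw [← mulVec_mulVec, ← mulVec_mulVec, hvec i, mulVec_smul, aux_vecMulVec_mulVec,
      hdot a i]
    by_cases hai : a = i
    · subst hai
      simp only [if_pos rfl, one_smul, mulVec_smul, hvec a, smul_smul, dotProduct_smul,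
        smul_eq_mul]
      rw [smul_dotProduct, hdot a j, if_neg hij, smul_zero]
    · simp [if_neg hai]
  rw [hT]
  simp only [Matrix.mul_sub, Matrix.mul_add, mul_smul_comm, trace_sub, trace_add, trace_smul,
    smul_eq_mul]
  rw [key t s (ne_of_gt hst), key s t (ne_of_lt hst)]
  ring
end

section
/- For 1 ≤ s < t ≤ p and 1 ≤ u < v ≤ p, let A_{(s,t)(u,v)} denote the mixed second partial derivative ∂²/∂τ∂ρ, evaluated at (τ,ρ) = (0,0), of the matrix-valued map (τ,ρ) ↦ Γ · exp(τU_{st} + ρU_{uv}) · Λ · exp(τU_{st} + ρU_{uv})ᵗ · Γᵗ (matrix exponential). Then for every 1 ≤ a ≤ p: (1/(2λ_a²))·tr(A_{(s,t)(u,v)} · γ_a γ_aᵗ) = λ_a⁻²(λ_t − λ_a) if s = u = a and t = v; = λ_a⁻²(λ_s − λ_a) if s = u and t = v = a; and = 0 in all other cases. (This quantity is the m-connection embedding curvature H^m_{(s,t)(u,v)a} of the submanifold A(λ) of covariance matrices with fixed eigenvalues.) -/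
/-!
Restricted to the lines `r ↦ r • (X + Y)` and `r ↦ r • (X - Y)`, the map
`(τ, ρ) ↦ Γ exp(τX + ρY) Λ exp(τX + ρY)ᵀ Γᵀ` becomes `r ↦ Γ exp(rW) Λ exp(rWᵀ) Γᵀ`, whose second
derivative at `0` is the elementary `Γ (W²Λ + 2WΛWᵀ + Λ(Wᵀ)²) Γᵀ`. The second derivative of a `C²`
map is a symmetric bilinear form, so by polarization the mixed partial is a quarter of the
difference of these two, namely `Γ (½(XY + YX)Λ + ½Λ(XᵀYᵀ + YᵀXᵀ) + XΛYᵀ + YΛXᵀ) Γᵀ`.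
Pairing with `γ_a γ_aᵀ` and using `ΓᵀΓ = 1` extracts the `(a, a)` entry of the middle factor. For
`X = U_st`, `Y = U_uv` with `s < t`, `u < v`, this entry vanishes unless `(s, t) = (u, v)`, and then
equals `2(λ_t - λ_a)` at `a = s`, `2(λ_s - λ_a)` at `a = t`, and `0` elsewhere.
-/

open Matrix NormedSpace

attribute [local instance] Matrix.normedAddCommGroup Matrix.normedSpace

section SecondDerivative

variable {E F : Type*} [NormedAddCommGroup E] [NormedSpace ℝ E]
  [NormedAddCommGroup F] [NormedSpace ℝ F] {G : E → F}

theorem hasDerivAt_add_smul (x u : E) (r : ℝ) : HasDerivAt (fun r : ℝ => x + r • u) u r := by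
  simpa using ((hasDerivAt_id r).smul_const u).const_add x

theorem deriv_deriv_add_smul_add_smul (hG : ContDiff ℝ 2 G) (x v w : E) :
    deriv (fun τ : ℝ => deriv (fun ρ : ℝ => G (x + τ • v + ρ • w)) 0) 0 =
      fderiv ℝ (fderiv ℝ G) x v w := by
  have hG' : Differentiable ℝ (fderiv ℝ G) :=
    (hG.fderiv_right (m := 1) (by norm_num)).differentiable (by norm_num)
  have inner (τ : ℝ) : deriv (fun ρ : ℝ => G (x + τ • v + ρ • w)) 0 =
      fderiv ℝ G (x + τ • v) w :=
    ((hG.differentiable (by norm_num) _).hasFDerivAt.comp_hasDerivAt_of_eq (0 : ℝ)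
      (hasDerivAt_add_smul _ w 0) (by simp)).deriv
  simp_rw [inner]
  exact (((hG' x).hasFDerivAt.comp_hasDerivAt_of_eq (0 : ℝ) (hasDerivAt_add_smul x v 0)
    (by simp)).clm_apply (hasDerivAt_const (0 : ℝ) w)).deriv.trans (by simp)

theorem deriv_deriv_add_smul (hG : ContDiff ℝ 2 G) (x u : E) :
    deriv (deriv fun r : ℝ => G (x + r • u)) 0 = fderiv ℝ (fderiv ℝ G) x u u := by
  rw [← deriv_deriv_add_smul_add_smul hG]
  congr 1
  ext τ
  have hshift : (fun ρ : ℝ => G (x + τ • u + ρ • u)) = fun ρ => G (x + (ρ + τ) • u) := by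
    simp only [add_smul, add_assoc, add_comm (τ • u)]
  rw [hshift, deriv_comp_add_const (f := fun r => G (x + r • u)), zero_add]

theorem deriv_deriv_add_smul_add_smul_eq_polarization (hG : ContDiff ℝ 2 G) (x v w : E) :
    deriv (fun τ : ℝ => deriv (fun ρ : ℝ => G (x + τ • v + ρ • w)) 0) 0 =
      (4 : ℝ)⁻¹ • (deriv (deriv fun r : ℝ => G (x + r • (v + w))) 0 -
        deriv (deriv fun r : ℝ => G (x + r • (v - w))) 0) := by
  have hsymm := (hG.contDiffAt (x := x)).isSymmSndFDerivAt (by simp)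
  simp only [deriv_deriv_add_smul_add_smul hG, deriv_deriv_add_smul hG, map_add, map_sub,
    _root_.add_apply, _root_.sub_apply, hsymm w v]
  module

end SecondDerivative

section NormedAlgebra

variable {𝔸 : Type*} [NormedRing 𝔸] [NormedAlgebra ℝ 𝔸] [CompleteSpace 𝔸]

theorem hasDerivAt_exp_smul_mul_mul_exp_smul (W L W' : 𝔸) (r : ℝ) :
    HasDerivAt (fun r : ℝ => exp (r • W) * L * exp (r • W'))
      (W * (exp (r • W) * L * exp (r • W')) + exp (r • W) * L * exp (r • W') * W') r := by
  refine (((hasDerivAt_exp_smul_const' W r).mul_const L).mul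
    (hasDerivAt_exp_smul_const W' r)).congr_deriv ?_
  simp only [mul_assoc]

theorem deriv_deriv_mul_exp_smul_mul_mul_exp_smul_mul (Γ W L W' Γ' : 𝔸) :
    deriv (deriv fun r : ℝ => Γ * exp (r • W) * L * exp (r • W') * Γ') 0 =
      Γ * (W * (W * L + L * W') + (W * L + L * W') * W') * Γ' := by
  set ψ : ℝ → 𝔸 := fun r => exp (r • W) * L * exp (r • W')
  have hψ (r : ℝ) : HasDerivAt ψ (W * ψ r + ψ r * W') r :=
    hasDerivAt_exp_smul_mul_mul_exp_smul W L W' r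
  have hderiv : deriv (fun r : ℝ => Γ * exp (r • W) * L * exp (r • W') * Γ') =
      fun r => Γ * (W * ψ r + ψ r * W') * Γ' := by
    funext r
    simpa only [ψ, mul_assoc] using (((hψ r).const_mul Γ).mul_const Γ').deriv
  have hψ0 : ψ 0 = L := by simp [ψ]
  rw [hderiv, ← hψ0]
  exact ((((hψ 0).const_mul W).add ((hψ 0).mul_const W')).const_mul Γ |>.mul_const Γ').deriv

theorem deriv_deriv_mul_exp_mul_mul_exp_mul (Γ L Γ' X Y X' Y' : 𝔸) :
    deriv (fun τ : ℝ => deriv (fun ρ : ℝ =>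
        Γ * exp (τ • X + ρ • Y) * L * exp (τ • X' + ρ • Y') * Γ') 0) 0 =
      Γ * ((2 : ℝ)⁻¹ • ((X * Y + Y * X) * L + L * (X' * Y' + Y' * X')) +
        X * L * Y' + Y * L * X') * Γ' := by
  set G : 𝔸 × 𝔸 → 𝔸 := fun Z => Γ * exp Z.1 * L * exp Z.2 * Γ'
  have hexp : ContDiff ℝ 2 (exp : 𝔸 → 𝔸) := AnalyticOnNhd.contDiff fun Z _ => exp_analytic Z
  have hG : ContDiff ℝ 2 G :=
    (((contDiff_const.mul (hexp.comp contDiff_fst)).mul contDiff_const).mul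
      (hexp.comp contDiff_snd)).mul contDiff_const
  have hpol := deriv_deriv_add_smul_add_smul_eq_polarization hG 0 (X, X') (Y, Y')
  simp only [G, zero_add, Prod.smul_mk, Prod.mk_add_mk, Prod.mk_sub_mk] at hpol
  rw [hpol, deriv_deriv_mul_exp_smul_mul_mul_exp_smul_mul,
    deriv_deriv_mul_exp_smul_mul_mul_exp_smul_mul, ← sub_mul, ← mul_sub, ← smul_mul_assoc,
    ← mul_smul_comm]
  congr 2
  noncomm_ring
  module

end NormedAlgebra

namespace Matrix

variable {n R : Type*} [DecidableEq n]

def skewUnit [Ring R] (s t : n) : Matrix n n R := single s t 1 - single t s 1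

theorem transpose_skewUnit [Ring R] (s t : n) :
    (skewUnit s t : Matrix n n R)ᵀ = -skewUnit s t := by
  simp only [skewUnit, transpose_sub, transpose_single, neg_sub]

variable [Fintype n]

theorem deriv_deriv_mul_exp_mul_mul_transpose_exp_mul (Γ L X Y : Matrix n n ℝ) :
    deriv (fun τ : ℝ => deriv (fun ρ : ℝ =>
        Γ * exp (τ • X + ρ • Y) * L * (exp (τ • X + ρ • Y))ᵀ * Γᵀ) 0) 0 =
      Γ * ((2 : ℝ)⁻¹ • ((X * Y + Y * X) * L + L * (Xᵀ * Yᵀ + Yᵀ * Xᵀ)) +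
        X * L * Yᵀ + Y * L * Xᵀ) * Γᵀ := by
  -- The operator norm makes matrices a normed algebra with the same topology as the entrywise
  -- norm, so `exp` and `deriv` are unchanged.
  let _ : NormedRing (Matrix n n ℝ) := Matrix.linftyOpNormedRing
  let _ : NormedAlgebra ℝ (Matrix n n ℝ) := Matrix.linftyOpNormedAlgebra
  simp only [← exp_transpose, transpose_add, transpose_smul]
  exact @deriv_deriv_mul_exp_mul_mul_exp_mul _ _ _ (FiniteDimensional.complete ℝ _)
    Γ L Γᵀ X Y Xᵀ Yᵀ

theorem trace_mul_vecMulVec_col_of_mem_orthogonalGroup {Γ : Matrix n n ℝ}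
    (hΓ : Γ ∈ orthogonalGroup n ℝ) (M : Matrix n n ℝ) (a : n) :
    trace (Γ * M * Γᵀ * vecMulVec (fun i => Γ i a) (fun i => Γ i a)) = M a a := by
  have hcol : vecMulVec (fun i => Γ i a) (fun i => Γ i a) = Γ * single a a 1 * Γᵀ := by
    ext i j
    simp [vecMulVec_apply, mul_apply, single_apply, ite_and]
  rw [mem_orthogonalGroup_iff'] at hΓ
  rw [hcol]
  calc trace (Γ * M * Γᵀ * (Γ * single a a 1 * Γᵀ))
      = trace (Γ * (M * single a a 1) * Γᵀ) := by
        simp only [mul_assoc, ← mul_assoc Γᵀ Γ, hΓ, one_mul]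
    _ = M a a := by simp [trace_mul_cycle Γ, hΓ, trace_mul_single]

variable [CommRing R]

theorem skewUnit_mul_diagonal_mul_self_apply_self {s t : n} (hst : s ≠ t) (d : n → R) (a : n) :
    (skewUnit s t * diagonal d * skewUnit s t : Matrix n n R) a a =
      -((if a = s then d t else 0) + (if a = t then d s else 0)) := by
  rw [mul_apply]
  simp only [skewUnit, mul_diagonal, sub_apply, single_apply, ite_and, sub_mul, ite_mul, one_mul,
    zero_mul, mul_sub, mul_ite, mul_one, mul_zero, Finset.sum_sub_distrib, Finset.sum_ite_eq,
    Finset.mem_univ, if_true]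
  split_ifs <;> subst_vars <;> simp_all

theorem skewUnit_mul_diagonal_mul_skewUnit_apply_self_of_ne [Preorder n] {s t u v : n}
    (hst : s < t) (huv : u < v) (h : ¬(s = u ∧ t = v)) (d : n → R) (a : n) :
    (skewUnit s t * diagonal d * skewUnit u v : Matrix n n R) a a = 0 := by
  rw [mul_apply]
  simp only [skewUnit, mul_diagonal, sub_apply, single_apply, ite_and, sub_mul, ite_mul, one_mul,
    zero_mul, mul_sub, mul_ite, mul_one, mul_zero, Finset.sum_sub_distrib, Finset.sum_ite_eq,
    Finset.mem_univ, if_true]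
  split_ifs <;> subst_vars <;> first | (exfalso; exact lt_asymm hst huv) | simp_all

theorem skewUnit_mixedSecondDeriv_apply_self [Preorder n] {s t u v : n} (hst : s < t)
    (huv : u < v) (d : n → ℝ) (a : n) :
    ((2 : ℝ)⁻¹ • ((skewUnit s t * skewUnit u v + skewUnit u v * skewUnit s t) * diagonal d +
        diagonal d * ((skewUnit s t)ᵀ * (skewUnit u v)ᵀ + (skewUnit u v)ᵀ * (skewUnit s t)ᵀ)) +
      skewUnit s t * diagonal d * (skewUnit u v)ᵀ + skewUnit u v * diagonal d * (skewUnit s t)ᵀ :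
        Matrix n n ℝ) a a =
      2 * (if s = u ∧ u = a ∧ t = v then d t - d a
        else if s = u ∧ t = v ∧ v = a then d s - d a else 0) := by
  simp only [transpose_skewUnit, neg_mul, mul_neg, neg_neg, add_apply, neg_apply, smul_apply,
    mul_diagonal, diagonal_mul, smul_eq_mul]
  have hprod (P Q : Matrix n n ℝ) :
      (P * Q) a a = (P * diagonal (fun _ => 1) * Q : Matrix n n ℝ) a a := by
    simp
  rw [hprod (skewUnit s t), hprod (skewUnit u v)]
  by_cases h : s = u ∧ t = v
  · obtain ⟨rfl, rfl⟩ := h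
    simp only [skewUnit_mul_diagonal_mul_self_apply_self hst.ne, true_and]
    obtain rfl | has := eq_or_ne a s
    · simp only [if_true, hst.ne, if_false, add_zero, neg_neg, and_self]
      ring
    obtain rfl | hat := eq_or_ne a t
    · simp only [hst.ne', if_true, if_false, zero_add, neg_neg, hst.ne, and_true]
      ring
    simp [has, hat, has.symm, hat.symm]
  · have h' : ¬(u = s ∧ v = t) := fun ⟨hus, hvt⟩ => h ⟨hus.symm, hvt.symm⟩
    rw [if_neg fun hc => h ⟨hc.1, hc.2.2⟩, if_neg fun hc => h ⟨hc.1, hc.2.1⟩]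
    simp only [skewUnit_mul_diagonal_mul_skewUnit_apply_self_of_ne hst huv h,
      skewUnit_mul_diagonal_mul_skewUnit_apply_self_of_ne huv hst h']
    norm_num

end Matrix

theorem embedding_curvature_fixed_eigenvalue_submanifold_general
    (p : ℕ)
    (Γ : Matrix (Fin p) (Fin p) ℝ) (hΓ : Γ ∈ Matrix.orthogonalGroup (Fin p) ℝ)
    (lam : Fin p → ℝ)
    (Λ : Matrix (Fin p) (Fin p) ℝ) (hΛ : Λ = Matrix.diagonal lam)
    (U : Fin p → Fin p → Matrix (Fin p) (Fin p) ℝ)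
    (hU : ∀ s t, U s t = Matrix.single s t 1 - Matrix.single t s 1)
    (s t u v a : Fin p) (hst : s < t) (huv : u < v)
    (A : Matrix (Fin p) (Fin p) ℝ)
    (hA : A = deriv (fun τ : ℝ => deriv (fun ρ : ℝ =>
          Γ * NormedSpace.exp (τ • U s t + ρ • U u v) * Λ *
            (NormedSpace.exp (τ • U s t + ρ • U u v))ᵀ * Γᵀ) 0) 0) :
    (1 / (2 * (lam a) ^ 2)) *
        Matrix.trace (A * Matrix.vecMulVec (fun i => Γ i a) (fun i => Γ i a)) =
      if s = u ∧ u = a ∧ t = v then ((lam a) ^ 2)⁻¹ * (lam t - lam a)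
      else if s = u ∧ t = v ∧ v = a then ((lam a) ^ 2)⁻¹ * (lam s - lam a)
      else 0 := by
  obtain rfl : U = skewUnit := funext₂ hU
  rw [hA, hΛ, deriv_deriv_mul_exp_mul_mul_transpose_exp_mul,
    trace_mul_vecMulVec_col_of_mem_orthogonalGroup hΓ, skewUnit_mixedSecondDeriv_apply_self hst huv]
  split_ifs <;> ring

/-- The m-embedding curvature `H^m_{(s,t)(u,v)a}` of the fixed-eigenvalue
submanifold: with `A_{(s,t)(u,v)}` the mixed second partial derivative at `(0,0)` of
`(τ,ρ) ↦ Γ exp(τU_{st} + ρU_{uv}) Λ exp(τU_{st} + ρU_{uv})ᵗ Γᵗ`, one has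
`(1/(2λ_a²))·tr(A_{(s,t)(u,v)} γ_a γ_aᵗ) = λ_a⁻²(λ_t − λ_a)` if `s = u = a, t = v`;
`= λ_a⁻²(λ_s − λ_a)` if `s = u, t = v = a`; and `= 0` otherwise. -/
theorem embedding_curvature_fixed_eigenvalue_submanifold
    (p : ℕ) (hp : 2 ≤ p)
    (Γ : Matrix (Fin p) (Fin p) ℝ) (hΓ : Γ ∈ Matrix.orthogonalGroup (Fin p) ℝ)
    (lam : Fin p → ℝ) (hlam : StrictAnti lam) (hpos : ∀ i, 0 < lam i)
    (Λ : Matrix (Fin p) (Fin p) ℝ) (hΛ : Λ = Matrix.diagonal lam)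
    (U : Fin p → Fin p → Matrix (Fin p) (Fin p) ℝ)
    (hU : ∀ s t, U s t = Matrix.single s t 1 - Matrix.single t s 1)
    (s t u v a : Fin p) (hst : s < t) (huv : u < v)
    (A : Matrix (Fin p) (Fin p) ℝ)
    (hA : A = deriv (fun τ : ℝ => deriv (fun ρ : ℝ =>
          Γ * NormedSpace.exp (τ • U s t + ρ • U u v) * Λ *
            (NormedSpace.exp (τ • U s t + ρ • U u v))ᵀ * Γᵀ) 0) 0) :
    (1 / (2 * (lam a) ^ 2)) *
        Matrix.trace (A * Matrix.vecMulVec (fun i => Γ i a) (fun i => Γ i a)) =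
      if s = u ∧ u = a ∧ t = v then ((lam a) ^ 2)⁻¹ * (lam t - lam a)
      else if s = u ∧ t = v ∧ v = a then ((lam a) ^ 2)⁻¹ * (lam s - lam a)
      else 0 :=
  embedding_curvature_fixed_eigenvalue_submanifold_general p Γ hΓ lam Λ hΛ U hU s t u v a hst huv A
    hA
end

section
/- For 1 ≤ s < t ≤ p define G(s,t) = λ_s λ_t/(λ_s − λ_t)², and for 1 ≤ s < t ≤ p, 1 ≤ u < v ≤ p, 1 ≤ a ≤ p define H(s,t,u,v,a) = λ_a⁻²(λ_t − λ_a) if s = u = a and t = v; = λ_a⁻²(λ_s − λ_a) if s = u and t = v = a; and = 0 otherwise. Then for all 1 ≤ a, b ≤ p: (1/2)·∑_{1 ≤ s < t ≤ p} ∑_{1 ≤ u < v ≤ p} H(s,t,u,v,a)·H(s,t,u,v,b)·G(s,t)·G(u,v) = B_{ab}, where B_{aa} = (1/(2λ_a²))·∑_{t ≠ a} λ_t²/(λ_t − λ_a)² and B_{ab} = −1/(2(λ_a − λ_b)²) for a ≠ b. (B_{ab} is the leading term, as the sample size n → ∞, of the asymptotic information loss Δg_{ab}(l) incurred by using only the sample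 eigenvalues l and discarding the sample eigenvectors.) -/
/-!
Since `H(s,t,u,v,·)` vanishes unless `(u,v) = (s,t)`, only the diagonal terms
`(H(s,t,s,t,a) G(s,t)) (H(s,t,s,t,b) G(s,t))` survive. This summand is symmetric in `(s,t)` and
vanishes for `s = t`, so the sum over `s < t` is half the sum over all ordered pairs. Moreover
`H(s,t,s,t,c) G(s,t) = [s = c] w(c,t) + [t = c] w(c,s)` with
`w(c,t) = λ_c⁻² (λ_t - λ_c) G(c,t) = λ_t / (λ_c (λ_t - λ_c))`, and summing a product of two such
incidence expressions over all ordered pairs gives `2 ([a = b] ∑_t w(a,t)² + w(a,b) w(b,a))`.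
-/

open Finset

theorem Fintype.sum_sum_eq_single {ι κ M : Type*} [Fintype ι] [Fintype κ] [AddCommMonoid M]
    (F : ι → κ → M) (i : ι) (j : κ) (h : ∀ u v, (u, v) ≠ (i, j) → F u v = 0) :
    ∑ u, ∑ v, F u v = F i j := by
  rw [← Fintype.sum_prod_type']
  exact Fintype.sum_eq_single (i, j) fun x hx => h x.1 x.2 hx

theorem Fintype.sum_sum_eq_two_nsmul_sum_sum_lt {ι M : Type*} [Fintype ι] [LinearOrder ι]
    [AddCommMonoid M] (F : ι → ι → M) (hF : ∀ s t, F s t = F t s) (hdiag : ∀ s, F s s = 0) :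
    ∑ s, ∑ t, F s t = 2 • ∑ s, ∑ t, if s < t then F s t else 0 := by
  have hsplit : ∀ s t, F s t = (if s < t then F s t else 0) + (if t < s then F t s else 0) := by
    intro s t
    rcases lt_trichotomy s t with h | rfl | h
    · simp [h, h.not_gt]
    · simp [hdiag]
    · simp [h, h.not_gt, hF s t]
  calc ∑ s, ∑ t, F s t
      = ∑ s, ∑ t, ((if s < t then F s t else 0) + (if t < s then F t s else 0)) :=
        Finset.sum_congr rfl fun s _ => Finset.sum_congr rfl fun t _ => hsplit s t
    _ = 2 • ∑ s, ∑ t, if s < t then F s t else 0 := by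
        simp only [two_nsmul, sum_add_distrib]
        rw [Finset.sum_comm (f := fun s t => if t < s then F t s else 0)]

theorem Fintype.sum_sum_incidence_mul_incidence {ι R : Type*} [Fintype ι] [DecidableEq ι]
    [CommSemiring R] (q : ι → ι → R) (a b : ι) :
    ∑ s, ∑ t, ((if s = a then q a t else 0) + (if t = a then q a s else 0)) *
        ((if s = b then q b t else 0) + (if t = b then q b s else 0)) =
      2 * ((if a = b then ∑ t, q a t ^ 2 else 0) + q a b * q b a) := by
  simp only [add_mul, mul_add, ite_mul, mul_ite, zero_mul, mul_zero, sum_add_distrib,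
    sum_ite_irrel, sum_const_zero, Finset.sum_ite_eq', mem_univ, if_true]
  by_cases hab : a = b
  · subst hab
    simp only [if_true, sq]
    ring
  · simp only [hab, Ne.symm hab, if_false, zero_add, add_zero]
    ring

namespace InformationLoss

variable {ι : Type*}

noncomputable def invMetric (lam : ι → ℝ) (s t : ι) : ℝ := lam s * lam t / (lam s - lam t) ^ 2

noncomputable def mCurvature [DecidableEq ι] (lam : ι → ℝ) (s t u v a : ι) : ℝ :=
  if s = u ∧ u = a ∧ t = v then ((lam a) ^ 2)⁻¹ * (lam t - lam a)
  else if s = u ∧ t = v ∧ v = a then ((lam a) ^ 2)⁻¹ * (lam s - lam a)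
  else 0

/-- `H(a,t,a,t,a) G(a,t)`, the only kind of nonzero factor in the diagonal summands. -/
noncomputable def curvatureWeight (lam : ι → ℝ) (a t : ι) : ℝ :=
  (lam a ^ 2)⁻¹ * (lam t - lam a) * invMetric lam a t

theorem invMetric_comm (lam : ι → ℝ) (s t : ι) : invMetric lam s t = invMetric lam t s := by
  unfold invMetric
  ring

/-- A junk value: the denominator `(λ_s - λ_s)²` is zero. -/
theorem invMetric_self (lam : ι → ℝ) (s : ι) : invMetric lam s s = 0 := by
  simp [invMetric]

theorem curvatureWeight_self (lam : ι → ℝ) (a : ι) : curvatureWeight lam a a = 0 := by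
  simp [curvatureWeight]

theorem curvatureWeight_eq {lam : ι → ℝ} {a t : ι} (ha : lam a ≠ 0) (hta : lam t ≠ lam a) :
    curvatureWeight lam a t = lam t / (lam a * (lam t - lam a)) := by
  have h : lam t - lam a ≠ 0 := sub_ne_zero.mpr hta
  have h' : lam a - lam t ≠ 0 := sub_ne_zero.mpr hta.symm
  unfold curvatureWeight invMetric
  field_simp
  ring

theorem mCurvature_eq_zero_of_ne [DecidableEq ι] (lam : ι → ℝ) {s t u v : ι}
    (h : (u, v) ≠ (s, t)) (a : ι) : mCurvature lam s t u v a = 0 := by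
  have hst : ¬(s = u ∧ t = v) := fun ⟨hs, ht⟩ => h (by rw [hs, ht])
  unfold mCurvature
  rw [if_neg (by tauto), if_neg (by tauto)]

theorem mCurvature_mul_invMetric [DecidableEq ι] (lam : ι → ℝ) (s t a : ι) :
    mCurvature lam s t s t a * invMetric lam s t =
      (if s = a then curvatureWeight lam a t else 0) +
        (if t = a then curvatureWeight lam a s else 0) := by
  unfold mCurvature curvatureWeight
  by_cases hs : s = a <;> by_cases ht : t = a
  · subst hs ht
    simp
  · subst hs
    simp [ht]
  · subst ht
    simp [hs, invMetric_comm lam s]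
  · simp [hs, ht]

theorem half_sum_pairs_mCurvature [Fintype ι] [LinearOrder ι] [DecidableEq ι] (lam : ι → ℝ)
    (a b : ι) :
    (1 / 2 : ℝ) * ∑ s, ∑ t, ∑ u, ∑ v, (if s < t ∧ u < v then
        mCurvature lam s t u v a * mCurvature lam s t u v b * invMetric lam s t * invMetric lam u v
        else 0) =
      (1 / 2) * ((if a = b then ∑ t, curvatureWeight lam a t ^ 2 else 0) +
        curvatureWeight lam a b * curvatureWeight lam b a) := by
  set T : ι → ι → ℝ := fun s t =>
    (mCurvature lam s t s t a * invMetric lam s t) * (mCurvature lam s t s t b * invMetric lam s t)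
  have hdiag : ∀ s t, ∑ u, ∑ v, (if s < t ∧ u < v then
      mCurvature lam s t u v a * mCurvature lam s t u v b * invMetric lam s t * invMetric lam u v
      else 0) = if s < t then T s t else 0 := by
    intro s t
    rw [Fintype.sum_sum_eq_single _ s t fun u v h => by simp [mCurvature_eq_zero_of_ne lam h]]
    simp only [T, and_self]
    split_ifs <;> ring
  have hsum : ∑ s, ∑ t, T s t = 2 * ((if a = b then ∑ t, curvatureWeight lam a t ^ 2 else 0) +
      curvatureWeight lam a b * curvatureWeight lam b a) := by
    simp only [T, mCurvature_mul_invMetric]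
    exact Fintype.sum_sum_incidence_mul_incidence _ a b
  have hT_comm : ∀ s t, T s t = T t s := fun s t => by
    simp only [T, mCurvature_mul_invMetric]
    ring
  have hT_self : ∀ s, T s s = 0 := fun s => by simp [T, invMetric_self]
  rw [Fintype.sum_sum_eq_two_nsmul_sum_sum_lt T hT_comm hT_self, nsmul_eq_mul] at hsum
  simp only [hdiag]
  linear_combination hsum / 4

theorem sum_curvatureWeight_sq [Fintype ι] [DecidableEq ι] {lam : ι → ℝ} (hinj : lam.Injective)
    {a : ι} (ha : lam a ≠ 0) :
    ∑ t, curvatureWeight lam a t ^ 2 =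
      (1 / lam a ^ 2) * ∑ t, if t ≠ a then lam t ^ 2 / (lam t - lam a) ^ 2 else 0 := by
  rw [mul_sum]
  refine Finset.sum_congr rfl fun t _ => ?_
  by_cases hta : t = a
  · simp [hta, curvatureWeight_self]
  · have h : lam t - lam a ≠ 0 := sub_ne_zero.mpr (hinj.ne hta)
    rw [if_pos hta, curvatureWeight_eq ha (hinj.ne hta)]
    field_simp

theorem curvatureWeight_mul_swap {lam : ι → ℝ} {a b : ι} (ha : lam a ≠ 0) (hb : lam b ≠ 0)
    (hab : lam a ≠ lam b) :
    curvatureWeight lam a b * curvatureWeight lam b a = -1 / (lam a - lam b) ^ 2 := by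
  have h : lam a - lam b ≠ 0 := sub_ne_zero.mpr hab
  have h' : lam b - lam a ≠ 0 := sub_ne_zero.mpr hab.symm
  rw [curvatureWeight_eq ha hab.symm, curvatureWeight_eq hb hab]
  field_simp
  ring

end InformationLoss

open InformationLoss in
theorem information_loss_leading_term_general
    (p : ℕ)
    (lam : Fin p → ℝ) (hlam : StrictAnti lam) (hpos : ∀ i, 0 < lam i)
    (G : Fin p → Fin p → ℝ)
    (hG : ∀ s t, G s t = lam s * lam t / (lam s - lam t) ^ 2)
    (H : Fin p → Fin p → Fin p → Fin p → Fin p → ℝ)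
    (hH : ∀ s t u v a, H s t u v a =
      if s = u ∧ u = a ∧ t = v then ((lam a) ^ 2)⁻¹ * (lam t - lam a)
      else if s = u ∧ t = v ∧ v = a then ((lam a) ^ 2)⁻¹ * (lam s - lam a)
      else 0)
    (a b : Fin p) :
    (1 / 2 : ℝ) * ∑ s : Fin p, ∑ t : Fin p, ∑ u : Fin p, ∑ v : Fin p,
        (if s < t ∧ u < v then H s t u v a * H s t u v b * G s t * G u v else 0) =
      if a = b then
        (1 / (2 * (lam a) ^ 2)) *
          ∑ t : Fin p, (if t ≠ a then (lam t) ^ 2 / (lam t - lam a) ^ 2 else 0)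
      else -(1 / (2 * (lam a - lam b) ^ 2)) := by
  obtain rfl : G = invMetric lam := funext fun s => funext (hG s)
  obtain rfl : H = mCurvature lam := by
    ext s t u v c
    exact hH s t u v c
  rw [half_sum_pairs_mCurvature]
  split_ifs with hab
  · subst hab
    rw [curvatureWeight_self, mul_zero, add_zero,
      sum_curvatureWeight_sq hlam.injective (hpos a).ne']
    ring
  · rw [zero_add, curvatureWeight_mul_swap (hpos a).ne' (hpos b).ne' (hlam.injective.ne hab)]
    field_simp

/-- The leading term of the asymptotic information loss: with
`G(s,t) = λ_s λ_t/(λ_s − λ_t)²` (the inverse metric components) and `H(s,t,u,v,a)` the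
m-embedding curvature of the fixed-eigenvalue submanifold,
`(1/2) ∑_{s<t} ∑_{u<v} H(s,t,u,v,a) H(s,t,u,v,b) G(s,t) G(u,v) = B_{ab}`, where
`B_{aa} = (1/(2λ_a²)) ∑_{t ≠ a} λ_t²/(λ_t − λ_a)²` and
`B_{ab} = −1/(2(λ_a − λ_b)²)` for `a ≠ b`. -/
theorem information_loss_leading_term
    (p : ℕ) (hp : 2 ≤ p)
    (lam : Fin p → ℝ) (hlam : StrictAnti lam) (hpos : ∀ i, 0 < lam i)
    (G : Fin p → Fin p → ℝ)
    (hG : ∀ s t, G s t = lam s * lam t / (lam s - lam t) ^ 2)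
    (H : Fin p → Fin p → Fin p → Fin p → Fin p → ℝ)
    (hH : ∀ s t u v a, H s t u v a =
      if s = u ∧ u = a ∧ t = v then ((lam a) ^ 2)⁻¹ * (lam t - lam a)
      else if s = u ∧ t = v ∧ v = a then ((lam a) ^ 2)⁻¹ * (lam s - lam a)
      else 0)
    (a b : Fin p) :
    (1 / 2 : ℝ) * ∑ s : Fin p, ∑ t : Fin p, ∑ u : Fin p, ∑ v : Fin p,
        (if s < t ∧ u < v then H s t u v a * H s t u v b * G s t * G u v else 0) =
      if a = b then
        (1 / (2 * (lam a) ^ 2)) *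
          ∑ t : Fin p, (if t ≠ a then (lam t) ^ 2 / (lam t - lam a) ^ 2 else 0)
      else -(1 / (2 * (lam a - lam b) ^ 2)) :=
  information_loss_leading_term_general p lam hlam hpos G hG H hH a b
end

section
/- Let Σ be a p×p real symmetric positive definite matrix and Γ a p×p real orthogonal matrix with columns γ_1,…,γ_p. Define f on the positive orthant {d ∈ ℝ^p : d_i > 0 for all i} by f(d) = tr(Σ · (Γ diag(d) Γᵗ)⁻¹) − log det(Σ · (Γ diag(d) Γᵗ)⁻¹) − p, which is the Kullback–Leibler divergence KL(N(0,Σ), N(0, Γ diag(d) Γᵗ)) between the corresponding zero-mean normal distributions. Then f attains a unique global minimum on the positive orthant, attained exactly at the point d* with d*_i = (Γᵗ Σ Γ)_{ii} = γ_iᵗ Σ γ_i for i = 1,…,p. (Hence the set Ã(λ,Γ) = {Σ : (ΓᵗΣΓ)_{ii} = λ_i for all i} consists of the covariance matrices whose KL-closest point on the fixed-eigenvector family {Γ diag(d) Γᵗ} is Γ diag(λ) Γᵗ.) -/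
/-!
Conjugation by the orthogonal `Γ` makes the divergence separable: with
`a i = (Γᵀ * S * Γ) i i`, `f d = ∑ i, (a i / d i + log (d i)) - log (det S) - p`.
Each summand is minimised exactly at `d i = a i`, since `log t ≤ t - 1` with equality
only at `t = 1`; and `a i > 0` because `Γᵀ * S * Γ` is again positive definite.
-/

open Matrix Real

namespace Matrix
variable {n : Type*} [Fintype n] [DecidableEq n]

lemma inv_conj_diagonal_of_mem_orthogonalGroup {K : Type*} [Field K] {Γ : Matrix n n K}
    (hΓ : Γ ∈ orthogonalGroup n K) {d : n → K} (hd : ∀ i, d i ≠ 0) :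
    (Γ * diagonal d * Γᵀ)⁻¹ = Γ * diagonal d⁻¹ * Γᵀ := by
  have hdiag : (diagonal d)⁻¹ = diagonal d⁻¹ :=
    inv_eq_left_inv <| by simp [diagonal_mul_diagonal, inv_mul_cancel₀ (hd _)]
  rw [mul_inv_rev, mul_inv_rev, hdiag, inv_eq_left_inv ((mem_orthogonalGroup_iff' n K).mp hΓ),
    inv_eq_left_inv ((mem_orthogonalGroup_iff n K).mp hΓ), mul_assoc]

lemma trace_mul_conj_diagonal {R : Type*} [CommSemiring R] (S Γ : Matrix n n R) (e : n → R) :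
    trace (S * (Γ * diagonal e * Γᵀ)) = ∑ i, (Γᵀ * S * Γ) i i * e i := by
  rw [← mul_assoc, ← mul_assoc, trace_mul_comm, ← mul_assoc, ← mul_assoc]
  simp [trace, mul_diagonal]

lemma det_conj_diagonal_of_mem_orthogonalGroup {R : Type*} [CommRing R] {Γ : Matrix n n R}
    (hΓ : Γ ∈ orthogonalGroup n R) (e : n → R) :
    det (Γ * diagonal e * Γᵀ) = ∏ i, e i := by
  rw [det_mul_comm, ← mul_assoc, (mem_orthogonalGroup_iff' n R).mp hΓ, one_mul, det_diagonal]

lemma PosDef.transpose_mul_mul_diag_pos {S Γ : Matrix n n ℝ} (hS : S.PosDef)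
    (hΓ : Γ ∈ orthogonalGroup n ℝ) (i : n) : 0 < (Γᵀ * S * Γ) i i := by
  have hinj : Function.Injective Γ.mulVec := mulVec_injective_iff_isUnit.mpr <|
    .of_mul_eq_one_right _ ((mem_orthogonalGroup_iff' n ℝ).mp hΓ)
  simpa [conjTranspose_eq_transpose_of_trivial] using
    (hS.conjTranspose_mul_mul_same hinj).diag_pos (i := i)

lemma trace_sub_log_det_mul_inv_conj_diagonal {S Γ : Matrix n n ℝ} (hS : S.det ≠ 0)
    (hΓ : Γ ∈ orthogonalGroup n ℝ) {d : n → ℝ} (hd : ∀ i, 0 < d i) :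
    trace (S * (Γ * diagonal d * Γᵀ)⁻¹) - log (det (S * (Γ * diagonal d * Γᵀ)⁻¹))
      = ∑ i, ((Γᵀ * S * Γ) i i / d i + log (d i)) - log S.det := by
  have hd₀ : ∀ i, d i ≠ 0 := fun i => (hd i).ne'
  rw [inv_conj_diagonal_of_mem_orthogonalGroup hΓ hd₀, trace_mul_conj_diagonal, det_mul,
    det_conj_diagonal_of_mem_orthogonalGroup hΓ]
  simp only [Pi.inv_apply]
  rw [log_mul hS (Finset.prod_ne_zero_iff.mpr fun i _ => inv_ne_zero (hd₀ i)),
    log_prod fun i _ => inv_ne_zero (hd₀ i)]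
  simp only [log_inv, Finset.sum_neg_distrib, Finset.sum_add_distrib, div_eq_mul_inv]
  ring

end Matrix

namespace Real

lemma one_add_log_le_div_add_log {a x : ℝ} (ha : 0 < a) (hx : 0 < x) :
    1 + log a ≤ a / x + log x := by
  have := log_le_sub_one_of_pos (div_pos ha hx)
  rw [log_div ha.ne' hx.ne'] at this
  linarith

lemma one_add_log_lt_div_add_log {a x : ℝ} (ha : 0 < a) (hx : 0 < x) (hxa : x ≠ a) :
    1 + log a < a / x + log x := by
  have := log_lt_sub_one_of_pos (div_pos ha hx) (by rwa [ne_eq, div_eq_one_iff_eq hx.ne', eq_comm])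
  rw [log_div ha.ne' hx.ne'] at this
  linarith

end Real

theorem kl_projection_onto_fixed_eigenvector_family_general
    (p : ℕ)
    (S : Matrix (Fin p) (Fin p) ℝ) (hS : S.PosDef)
    (Γ : Matrix (Fin p) (Fin p) ℝ) (hΓ : Γ ∈ Matrix.orthogonalGroup (Fin p) ℝ)
    (f : (Fin p → ℝ) → ℝ)
    (hf : ∀ d : Fin p → ℝ, f d =
      Matrix.trace (S * (Γ * Matrix.diagonal d * Γᵀ)⁻¹)
        - Real.log (Matrix.det (S * (Γ * Matrix.diagonal d * Γᵀ)⁻¹)) - p)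
    (dstar : Fin p → ℝ) (hdstar : ∀ i, dstar i = (Γᵀ * S * Γ) i i) :
    (∀ i, 0 < dstar i)
    ∧ (∀ d : Fin p → ℝ, (∀ i, 0 < d i) → f dstar ≤ f d)
    ∧ (∀ d : Fin p → ℝ, (∀ i, 0 < d i) → d ≠ dstar → f dstar < f d) := by
  have hpos : ∀ i, 0 < dstar i := fun i => hdstar i ▸ hS.transpose_mul_mul_diag_pos hΓ i
  have hf_eq : ∀ d : Fin p → ℝ, (∀ i, 0 < d i) →
      f d = ∑ i, (dstar i / d i + log (d i)) - log S.det - p := fun d hd => by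
    rw [hf, trace_sub_log_det_mul_inv_conj_diagonal hS.det_pos.ne' hΓ hd]
    simp only [hdstar]
  have hf_dstar : f dstar = ∑ i, (1 + log (dstar i)) - log S.det - p := by
    rw [hf_eq dstar hpos]
    simp only [div_self (hpos _).ne']
  refine ⟨hpos, fun d hd => ?_, fun d hd hne => ?_⟩
  · rw [hf_dstar, hf_eq d hd]
    gcongr ?_ - _ - _
    exact Finset.sum_le_sum fun i _ => one_add_log_le_div_add_log (hpos i) (hd i)
  · obtain ⟨i, hi⟩ := Function.ne_iff.mp hne
    rw [hf_dstar, hf_eq d hd]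
    gcongr ?_ - _ - _
    exact Finset.sum_lt_sum (fun j _ => one_add_log_le_div_add_log (hpos j) (hd j))
      ⟨i, Finset.mem_univ i, one_add_log_lt_div_add_log (hpos i) (hd i) hi⟩

/-- The Kullback–Leibler divergence
`f(d) = tr(Σ (Γ diag(d) Γᵗ)⁻¹) − log det(Σ (Γ diag(d) Γᵗ)⁻¹) − p` from `N(0,Σ)` to the
fixed-eigenvector family attains a unique global minimum on the positive orthant,
exactly at `d*` with `d*_i = (Γᵗ Σ Γ)_{ii}`. -/
theorem kl_projection_onto_fixed_eigenvector_family
    (p : ℕ) (hp : 1 ≤ p)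
    (S : Matrix (Fin p) (Fin p) ℝ) (hS : S.PosDef)
    (Γ : Matrix (Fin p) (Fin p) ℝ) (hΓ : Γ ∈ Matrix.orthogonalGroup (Fin p) ℝ)
    (f : (Fin p → ℝ) → ℝ)
    (hf : ∀ d : Fin p → ℝ, f d =
      Matrix.trace (S * (Γ * Matrix.diagonal d * Γᵀ)⁻¹)
        - Real.log (Matrix.det (S * (Γ * Matrix.diagonal d * Γᵀ)⁻¹)) - p)
    (dstar : Fin p → ℝ) (hdstar : ∀ i, dstar i = (Γᵀ * S * Γ) i i) :
    (∀ i, 0 < dstar i)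
    ∧ (∀ d : Fin p → ℝ, (∀ i, 0 < d i) → f dstar ≤ f d)
    ∧ (∀ d : Fin p → ℝ, (∀ i, 0 < d i) → d ≠ dstar → f dstar < f d) :=
  kl_projection_onto_fixed_eigenvector_family_general p S hS Γ hΓ f hf dstar hdstar
end

section
/- Let l̄_1 > ⋯ > l̄_p > 0 and L̄ = diag(l̄_1,…,l̄_p). Then for every Γ ∈ O(p): tr(L̄ Γᵗ L̄⁻¹ Γ) = ∑_{i,j} (l̄_j/l̄_i)·Γ_{ij}² ≥ p, with equality if and only if Γ is a diagonal matrix (necessarily with diagonal entries ±1). -/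
/-!
The squares `M i j = Γ i j ^ 2` of an orthogonal matrix form a doubly stochastic matrix, and the
trace is `∑ (l j / l i) M i j`. Because `M` is doubly stochastic, `∑ M i j = p` and the terms
`(log l j - log l i) M i j` sum to zero, so the trace minus `p` is `∑ (x - 1 - log x) M i j` with
`x = l j / l i`. Every term is nonnegative since `log x ≤ x - 1`, and it vanishes only if `x = 1`
or `M i j = 0`; for distinct `l i` this says exactly that `Γ` is diagonal.
-/

open Matrix

lemma Real.sub_one_sub_log_nonneg {x : ℝ} (hx : 0 < x) : 0 ≤ x - 1 - Real.log x := by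
  linarith [Real.log_le_sub_one_of_pos hx]

lemma Real.sub_one_sub_log_eq_zero_iff {x : ℝ} (hx : 0 < x) :
    x - 1 - Real.log x = 0 ↔ x = 1 := by
  refine ⟨fun h => ?_, fun h => by simp [h]⟩
  by_contra hx1
  linarith [Real.log_lt_sub_one_of_pos hx hx1]

namespace Matrix

variable {R n : Type*} [Fintype n] [DecidableEq n]

section OrthogonalGroup

variable [CommRing R] {Γ : Matrix n n R}

lemma sum_sq_row_of_mem_orthogonalGroup (hΓ : Γ ∈ orthogonalGroup n R) (i : n) :
    ∑ j, Γ i j ^ 2 = 1 := by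
  simpa [mul_apply, sq] using congr_fun₂ ((mem_orthogonalGroup_iff n R).mp hΓ) i i

lemma sum_sq_col_of_mem_orthogonalGroup (hΓ : Γ ∈ orthogonalGroup n R) (j : n) :
    ∑ i, Γ i j ^ 2 = 1 := by
  simpa [mul_apply, sq] using congr_fun₂ ((mem_orthogonalGroup_iff' n R).mp hΓ) j j

lemma map_sq_mem_doublyStochastic [LinearOrder R] [IsStrictOrderedRing R]
    (hΓ : Γ ∈ orthogonalGroup n R) : Γ.map (· ^ 2) ∈ doublyStochastic R n :=
  mem_doublyStochastic_iff_sum.mpr ⟨fun _ _ => sq_nonneg _,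
    sum_sq_row_of_mem_orthogonalGroup hΓ, sum_sq_col_of_mem_orthogonalGroup hΓ⟩

lemma diag_eq_one_or_neg_one_of_mem_orthogonalGroup [NoZeroDivisors R]
    (hΓ : Γ ∈ orthogonalGroup n R) (hdiag : ∀ i j, i ≠ j → Γ i j = 0) (i : n) :
    Γ i i = 1 ∨ Γ i i = -1 := by
  rw [← sq_eq_one_iff, ← sum_sq_row_of_mem_orthogonalGroup hΓ i,
    Finset.sum_eq_single i (fun j _ hji => by simp [hdiag i j hji.symm]) (by simp)]

end OrthogonalGroup

lemma trace_diagonal_mul_transpose_mul_diagonal_mul [CommSemiring R] (a b : n → R)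
    (A : Matrix n n R) :
    trace (diagonal a * Aᵀ * diagonal b * A) = ∑ i, ∑ j, a j * b i * A i j ^ 2 := by
  rw [trace, Finset.sum_comm]
  refine Finset.sum_congr rfl fun j _ => Finset.sum_congr rfl fun i _ => ?_
  simp [mul_apply, diagonal_apply]
  ring

lemma inv_diagonal_of_ne_zero [Field R] {l : n → R} (hl : ∀ i, l i ≠ 0) :
    (diagonal l)⁻¹ = diagonal l⁻¹ := by
  refine inv_eq_right_inv ?_
  rw [diagonal_mul_diagonal, ← diagonal_one]
  congr 1
  ext i
  simp [hl i]

section DoublyStochastic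

variable {M : Matrix n n R}

lemma sum_sum_of_mem_doublyStochastic [Semiring R] [PartialOrder R] [IsOrderedRing R]
    (hM : M ∈ doublyStochastic R n) : ∑ i, ∑ j, M i j = Fintype.card n := by
  simp [sum_row_of_mem_doublyStochastic hM]

lemma sum_sum_sub_mul_eq_zero_of_mem_doublyStochastic [CommRing R] [PartialOrder R]
    [IsOrderedRing R] (hM : M ∈ doublyStochastic R n) (f : n → R) :
    ∑ i, ∑ j, (f j - f i) * M i j = 0 := by
  simp only [sub_mul, Finset.sum_sub_distrib, ← Finset.mul_sum,
    sum_row_of_mem_doublyStochastic hM, mul_one]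
  rw [Finset.sum_comm]
  simp only [← Finset.mul_sum, sum_col_of_mem_doublyStochastic hM, mul_one, sub_self]

end DoublyStochastic

section RatioSum

variable {M : Matrix n n ℝ} {l : n → ℝ}

lemma sum_sum_div_mul_sub_card_eq (hM : M ∈ doublyStochastic ℝ n) (hl : ∀ i, 0 < l i) :
    ∑ i, ∑ j, l j / l i * M i j - Fintype.card n =
      ∑ i, ∑ j, (l j / l i - 1 - Real.log (l j / l i)) * M i j := by
  have hterm : ∀ i j, (l j / l i - 1 - Real.log (l j / l i)) * M i j =
      l j / l i * M i j - M i j - (Real.log (l j) - Real.log (l i)) * M i j := by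
    intro i j
    rw [Real.log_div (hl j).ne' (hl i).ne']
    ring
  simp only [hterm, Finset.sum_sub_distrib, sum_sum_of_mem_doublyStochastic hM,
    sum_sum_sub_mul_eq_zero_of_mem_doublyStochastic hM, sub_zero]

lemma div_sub_one_sub_log_div_mul_nonneg (hM : M ∈ doublyStochastic ℝ n)
    (hl : ∀ i, 0 < l i) (i j : n) :
    0 ≤ (l j / l i - 1 - Real.log (l j / l i)) * M i j :=
  mul_nonneg (Real.sub_one_sub_log_nonneg (div_pos (hl j) (hl i)))
    (nonneg_of_mem_doublyStochastic hM)

theorem card_le_sum_sum_div_mul_of_mem_doublyStochastic (hM : M ∈ doublyStochastic ℝ n)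
    (hl : ∀ i, 0 < l i) : (Fintype.card n : ℝ) ≤ ∑ i, ∑ j, l j / l i * M i j := by
  rw [← sub_nonneg, sum_sum_div_mul_sub_card_eq hM hl]
  exact Fintype.sum_nonneg fun i => Fintype.sum_nonneg fun j =>
    div_sub_one_sub_log_div_mul_nonneg hM hl i j

theorem sum_sum_div_mul_eq_card_iff_of_mem_doublyStochastic (hM : M ∈ doublyStochastic ℝ n)
    (hl : ∀ i, 0 < l i) :
    ∑ i, ∑ j, l j / l i * M i j = Fintype.card n ↔ ∀ i j, l i ≠ l j → M i j = 0 := by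
  have hterm_nonneg := div_sub_one_sub_log_div_mul_nonneg hM hl
  rw [← sub_eq_zero, sum_sum_div_mul_sub_card_eq hM hl, Finset.sum_eq_zero_iff_of_nonneg
    fun i _ => Finset.sum_nonneg fun j _ => hterm_nonneg i j]
  refine forall_congr' fun i => ?_
  rw [Finset.sum_eq_zero_iff_of_nonneg fun j _ => hterm_nonneg i j]
  simp only [Finset.mem_univ, true_implies]
  refine forall_congr' fun j => ?_
  rw [mul_eq_zero, Real.sub_one_sub_log_eq_zero_iff (div_pos (hl j) (hl i)),
    div_eq_one_iff_eq (hl i).ne', eq_comm, or_iff_not_imp_left]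

end RatioSum

end Matrix

theorem trace_inequality_orthogonal_group_general
    (p : ℕ)
    (lbar : Fin p → ℝ) (hl : StrictAnti lbar) (hlpos : ∀ i, 0 < lbar i)
    (Lbar : Matrix (Fin p) (Fin p) ℝ) (hLbar : Lbar = Matrix.diagonal lbar)
    (Γ : Matrix (Fin p) (Fin p) ℝ) (hΓ : Γ ∈ Matrix.orthogonalGroup (Fin p) ℝ) :
    (Matrix.trace (Lbar * Γᵀ * Lbar⁻¹ * Γ) =
        ∑ i : Fin p, ∑ j : Fin p, lbar j / lbar i * (Γ i j) ^ 2)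
    ∧ (p : ℝ) ≤ Matrix.trace (Lbar * Γᵀ * Lbar⁻¹ * Γ)
    ∧ (Matrix.trace (Lbar * Γᵀ * Lbar⁻¹ * Γ) = p ↔
        ∀ i j : Fin p, i ≠ j → Γ i j = 0)
    ∧ ((∀ i j : Fin p, i ≠ j → Γ i j = 0) → ∀ i, Γ i i = 1 ∨ Γ i i = -1) := by
  have htrace : trace (Lbar * Γᵀ * Lbar⁻¹ * Γ) = ∑ i, ∑ j, lbar j / lbar i * Γ i j ^ 2 := by
    rw [hLbar, inv_diagonal_of_ne_zero fun i => (hlpos i).ne',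
      trace_diagonal_mul_transpose_mul_diagonal_mul]
    simp only [Pi.inv_apply, ← div_eq_mul_inv]
  have hM := map_sq_mem_doublyStochastic hΓ
  refine ⟨htrace, ?_, ?_, diag_eq_one_or_neg_one_of_mem_orthogonalGroup hΓ⟩
  · simpa [htrace] using card_le_sum_sum_div_mul_of_mem_doublyStochastic hM hlpos
  · simpa [htrace, hl.injective.ne_iff] using
      sum_sum_div_mul_eq_card_iff_of_mem_doublyStochastic hM hlpos

/-- For `L̄ = diag(l̄)` with `l̄₁ > ⋯ > l̄_p > 0` and `Γ ∈ O(p)`: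
`tr(L̄ Γᵗ L̄⁻¹ Γ) = ∑_{i,j} (l̄_j/l̄_i) Γ_{ij}² ≥ p`, with equality iff `Γ` is diagonal
(in which case its diagonal entries are `±1`). -/
theorem trace_inequality_orthogonal_group
    (p : ℕ) (hp : 1 ≤ p)
    (lbar : Fin p → ℝ) (hl : StrictAnti lbar) (hlpos : ∀ i, 0 < lbar i)
    (Lbar : Matrix (Fin p) (Fin p) ℝ) (hLbar : Lbar = Matrix.diagonal lbar)
    (Γ : Matrix (Fin p) (Fin p) ℝ) (hΓ : Γ ∈ Matrix.orthogonalGroup (Fin p) ℝ) :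
    (Matrix.trace (Lbar * Γᵀ * Lbar⁻¹ * Γ) =
        ∑ i : Fin p, ∑ j : Fin p, lbar j / lbar i * (Γ i j) ^ 2)
    ∧ (p : ℝ) ≤ Matrix.trace (Lbar * Γᵀ * Lbar⁻¹ * Γ)
    ∧ (Matrix.trace (Lbar * Γᵀ * Lbar⁻¹ * Γ) = p ↔
        ∀ i j : Fin p, i ≠ j → Γ i j = 0)
    ∧ ((∀ i j : Fin p, i ≠ j → Γ i j = 0) → ∀ i, Γ i i = 1 ∨ Γ i i = -1) :=
  trace_inequality_orthogonal_group_general p lbar hl hlpos Lbar hLbar Γ hΓ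
end
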